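/- arXiv:1605.02665 — 6 statements merged into one kernel-verified Lean document; each statement's English description precedes it below -/
import Mathlib

section
/- Let T > 0, let g : [0,T] → [0,∞) be measurable with ∫₀ᵀ g(t) dt < ∞, let (C_n)_{n≥0} be a sequence of non-negative real numbers, and let (f_n)_{n≥0} be a sequence of non-negative measurable functions on [0,T] with M := sup_{t∈[0,T]} f_0(t) < ∞, satisfying f_{n+1}(t) ≤ C_n + ∫₀ᵗ f_n(s) g(t−s) ds for every n ≥ 0 and t ∈ [0,T]. Then there exists a sequence (a_n)_{n≥1} of non-negative constants with Σ_{n≥1} a_n^{1/p} < ∞ for every p > 1, such that for every n ≥ 1 and every t ∈ [0,T], f_n(t) ≤ C_{n−1} + Σ_{j=1}^{n−1} C_{n−1−j} a_j + M a_n. -/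
/-!
Choose `r ≥ 0` so large that the exponentially weighted kernel halves: for `t ∈ [0,T]`,
`∫₀ᵗ e^{rs} g(t-s) ds ≤ e^{rt}/2`. After the substitution `u = t - s` the left side is
`e^{rt} ∫₀ᵗ e^{-ru} g(u) du`, and `∫₀ᵀ e^{-ru} g(u) du → 0` as `r → ∞` by dominated convergence.
Hence a bound `f_n(s) ≤ c e^{rs}` on `[0,t]` gives `∫₀ᵗ f_n(s) g(t-s) ds ≤ (c/2) e^{rt}`, and
induction yields `f_{n+1}(t) ≤ C_n + (∑_{j=1}^n C_{n-j} 2^{-j} + M 2^{-(n+1)}) e^{rt}`.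
So `a_j = 2^{-j} e^{rT}` works, and `∑ a_j^{1/p}` is a geometric series.
-/

open MeasureTheory Set Filter Topology Real

noncomputable def gronwallCoeff (C : ℕ → ℝ) (M : ℝ) (n : ℕ) : ℝ :=
  ∑ j ∈ Finset.Icc 1 n, C (n - j) * 2⁻¹ ^ j + M * 2⁻¹ ^ (n + 1)

lemma gronwallCoeff_zero (C : ℕ → ℝ) (M : ℝ) : gronwallCoeff C M 0 = M / 2 := by
  simp [gronwallCoeff, div_eq_mul_inv]

lemma gronwallCoeff_succ (C : ℕ → ℝ) (M : ℝ) (n : ℕ) :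
    gronwallCoeff C M (n + 1) = (C n + gronwallCoeff C M n) / 2 := by
  have hshift : ∑ j ∈ Finset.Icc 1 (n + 1), C (n + 1 - j) * 2⁻¹ ^ j
      = C n * 2⁻¹ + (∑ j ∈ Finset.Icc 1 n, C (n - j) * 2⁻¹ ^ j) * 2⁻¹ := by
    rw [← Finset.map_add_right_Icc 0 n 1, Finset.sum_map,
      Finset.Icc_eq_cons_Ioc (Nat.zero_le n), Finset.sum_cons, ← Finset.Icc_add_one_left_eq_Ioc,
      Finset.sum_mul]
    simp [pow_succ, mul_assoc]
  rw [gronwallCoeff, hshift, gronwallCoeff]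
  ring

lemma gronwallCoeff_nonneg {C : ℕ → ℝ} {M : ℝ} (hC : ∀ n, 0 ≤ C n) (hM : 0 ≤ M) (n : ℕ) :
    0 ≤ gronwallCoeff C M n :=
  add_nonneg (Finset.sum_nonneg fun _ _ => mul_nonneg (hC _) (by positivity))
    (mul_nonneg hM (by positivity))

lemma summable_pow_mul_rpow {x : ℝ} (hx₀ : 0 ≤ x) (hx₁ : x < 1) {c : ℝ} (hc : 0 ≤ c) {q : ℝ}
    (hq : 0 < q) : Summable fun n : ℕ => (x ^ n * c) ^ q := by
  refine ((summable_geometric_of_lt_one (rpow_nonneg hx₀ q) (rpow_lt_one hx₀ hx₁ hq)).mul_right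
    (c ^ q)).congr fun n => ?_
  rw [mul_rpow (pow_nonneg hx₀ n) hc, ← rpow_natCast, ← rpow_natCast, ← rpow_mul hx₀,
    ← rpow_mul hx₀, mul_comm q]

lemma setIntegral_Icc_comp_const_sub {E : Type*} [NormedAddCommGroup E] [NormedSpace ℝ E]
    (φ : ℝ → E) (t : ℝ) :
    ∫ s in Icc 0 t, φ (t - s) = ∫ s in Icc 0 t, φ s := by
  have h := (Measure.measurePreserving_sub_left volume t).setIntegral_preimage_emb
    (Homeomorph.subLeft t).measurableEmbedding φ (Icc 0 t)
  rwa [preimage_const_sub_Icc, sub_self, sub_zero] at h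

lemma IntegrableOn.comp_const_sub_Icc {E : Type*} [NormedAddCommGroup E] {φ : ℝ → E} {t : ℝ}
    (hφ : IntegrableOn φ (Icc 0 t)) :
    IntegrableOn (fun s => φ (t - s)) (Icc 0 t) := by
  have h := (Measure.measurePreserving_sub_left volume t).integrableOn_comp_preimage
    (Homeomorph.subLeft t).measurableEmbedding (f := φ) (s := Icc 0 t)
  rw [preimage_const_sub_Icc, sub_self, sub_zero] at h
  exact h.2 hφ

lemma tendsto_setIntegral_exp_neg_mul_mul {g : ℝ → ℝ} {T : ℝ} (hg : IntegrableOn g (Ioc 0 T)) :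
    Tendsto (fun r => ∫ u in Ioc 0 T, exp (-(r * u)) * g u) atTop (𝓝 0) := by
  have hlim := tendsto_integral_filter_of_dominated_convergence (μ := volume.restrict (Ioc 0 T))
    (l := atTop) (F := fun r u => exp (-(r * u)) * g u) (f := fun _ => 0) (fun u => ‖g u‖)
    ?_ ?_ hg.norm ?_
  · simpa using hlim
  · exact Eventually.of_forall fun r =>
      (by fun_prop : Continuous fun u => exp (-(r * u))).aestronglyMeasurable.mul
        hg.aestronglyMeasurable
  · filter_upwards [eventually_ge_atTop 0] with r hr
    filter_upwards [ae_restrict_mem measurableSet_Ioc] with u hu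
    rw [norm_mul, norm_of_nonneg (exp_pos _).le]
    exact mul_le_of_le_one_left (norm_nonneg _) (exp_le_one_iff.2 (by nlinarith [hu.1]))
  · filter_upwards [ae_restrict_mem measurableSet_Ioc] with u hu
    simpa using (tendsto_exp_neg_atTop_nhds_zero.comp (tendsto_id.atTop_mul_const hu.1)).mul_const
      (g u)

lemma exists_setIntegral_exp_mul_comp_sub_le_half {g : ℝ → ℝ} {T : ℝ}
    (hg_nonneg : ∀ u ∈ Icc 0 T, 0 ≤ g u) (hg : IntegrableOn g (Icc 0 T)) :
    ∃ r, 0 ≤ r ∧ ∀ t ∈ Icc 0 T, ∫ s in Icc 0 t, exp (r * s) * g (t - s) ≤ exp (r * t) / 2 := by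
  obtain ⟨r, hr, hsmall⟩ := ((eventually_ge_atTop 0).and
    ((tendsto_setIntegral_exp_neg_mul_mul (hg.mono_set Ioc_subset_Icc_self)).eventually
      (ge_mem_nhds (by norm_num : (0 : ℝ) < 1 / 2)))).exists
  refine ⟨r, hr, fun t ht => ?_⟩
  have hweighted : IntegrableOn (fun u => exp (-(r * u)) * g u) (Icc 0 T) :=
    hg.continuousOn_mul (by fun_prop) isCompact_Icc
  calc ∫ s in Icc 0 t, exp (r * s) * g (t - s)
      = ∫ u in Icc 0 t, exp (r * t) * (exp (-(r * u)) * g u) := by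
        rw [← setIntegral_Icc_comp_const_sub]
        congr 1 with s
        rw [← mul_assoc, ← exp_add]
        ring_nf
    _ = exp (r * t) * ∫ u in Ioc 0 t, exp (-(r * u)) * g u := by
        rw [integral_const_mul, integral_Icc_eq_integral_Ioc]
    _ ≤ exp (r * t) * ∫ u in Ioc 0 T, exp (-(r * u)) * g u := by
        refine mul_le_mul_of_nonneg_left ?_ (exp_pos _).le
        refine setIntegral_mono_set (hweighted.mono_set Ioc_subset_Icc_self) ?_
          (Ioc_subset_Ioc_right ht.2).eventuallyLE
        filter_upwards [ae_restrict_mem measurableSet_Ioc] with u hu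
        exact mul_nonneg (exp_pos _).le (hg_nonneg u (Ioc_subset_Icc_self hu))
    _ ≤ exp (r * t) / 2 := by
        rw [div_eq_mul_one_div]
        exact mul_le_mul_of_nonneg_left hsmall (exp_pos _).le

lemma setIntegral_mul_comp_sub_le_of_le_mul_exp {g φ : ℝ → ℝ} {T r c t : ℝ}
    (hg_nonneg : ∀ u ∈ Icc 0 T, 0 ≤ g u) (hg : IntegrableOn g (Icc 0 T)) (ht : t ∈ Icc 0 T)
    (hkernel : ∫ s in Icc 0 t, exp (r * s) * g (t - s) ≤ exp (r * t) / 2)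
    (hφ_nonneg : ∀ s ∈ Icc 0 t, 0 ≤ φ s) (hφ : ∀ s ∈ Icc 0 t, φ s ≤ c * exp (r * s)) :
    ∫ s in Icc 0 t, φ s * g (t - s) ≤ c * exp (r * t) / 2 := by
  have h0 : (0 : ℝ) ∈ Icc 0 t := ⟨le_rfl, ht.1⟩
  have hc : 0 ≤ c := by simpa using (hφ_nonneg 0 h0).trans (hφ 0 h0)
  have hg_refl : ∀ s ∈ Icc 0 t, 0 ≤ g (t - s) := fun s hs =>
    hg_nonneg _ ⟨by linarith [hs.2], by linarith [hs.1, ht.2]⟩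
  have hint : IntegrableOn (fun s => exp (r * s) * g (t - s)) (Icc 0 t) :=
    IntegrableOn.continuousOn_mul (by fun_prop)
      (IntegrableOn.comp_const_sub_Icc (hg.mono_set (Icc_subset_Icc_right ht.2))) isCompact_Icc
  -- no integrability of `φ s * g (t - s)` is needed: a non-integrable one has integral `0`
  calc ∫ s in Icc 0 t, φ s * g (t - s)
      ≤ ∫ s in Icc 0 t, c * (exp (r * s) * g (t - s)) := by
        refine integral_mono_of_nonneg ?_ (hint.const_mul c) ?_
        · filter_upwards [ae_restrict_mem measurableSet_Icc] with s hs
          exact mul_nonneg (hφ_nonneg s hs) (hg_refl s hs)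
        · filter_upwards [ae_restrict_mem measurableSet_Icc] with s hs
          rw [← mul_assoc]
          exact mul_le_mul_of_nonneg_right (hφ s hs) (hg_refl s hs)
    _ = c * ∫ s in Icc 0 t, exp (r * s) * g (t - s) := integral_const_mul c _
    _ ≤ c * exp (r * t) / 2 := by
        rw [mul_div_assoc]
        exact mul_le_mul_of_nonneg_left hkernel hc

lemma le_add_gronwallCoeff_mul_exp {g : ℝ → ℝ} {T r M : ℝ} {C : ℕ → ℝ} {f : ℕ → ℝ → ℝ}
    (hg_nonneg : ∀ u ∈ Icc 0 T, 0 ≤ g u) (hg : IntegrableOn g (Icc 0 T)) (hr : 0 ≤ r)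
    (hkernel : ∀ t ∈ Icc 0 T, ∫ s in Icc 0 t, exp (r * s) * g (t - s) ≤ exp (r * t) / 2)
    (hC : ∀ n, 0 ≤ C n) (hf_nonneg : ∀ n, ∀ t ∈ Icc 0 T, 0 ≤ f n t)
    (hM : ∀ t ∈ Icc 0 T, f 0 t ≤ M)
    (hrec : ∀ n, ∀ t ∈ Icc 0 T, f (n + 1) t ≤ C n + ∫ s in Icc 0 t, f n s * g (t - s))
    (n : ℕ) : ∀ t ∈ Icc 0 T, f (n + 1) t ≤ C n + gronwallCoeff C M n * exp (r * t) := by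
  have hexp : ∀ s ∈ Icc 0 T, 1 ≤ exp (r * s) := fun s hs => one_le_exp (mul_nonneg hr hs.1)
  have hmem : ∀ t ∈ Icc 0 T, ∀ s ∈ Icc 0 t, s ∈ Icc 0 T := fun _ ht s hs =>
    ⟨hs.1, hs.2.trans ht.2⟩
  induction n with
  | zero =>
    intro t ht
    have hf₀ : ∀ s ∈ Icc 0 t, f 0 s ≤ M * exp (r * s) := fun s hs =>
      have hs := hmem t ht s hs
      (hM s hs).trans (le_mul_of_one_le_right ((hf_nonneg 0 s hs).trans (hM s hs)) (hexp s hs))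
    calc f 1 t ≤ C 0 + ∫ s in Icc 0 t, f 0 s * g (t - s) := hrec 0 t ht
      _ ≤ C 0 + M * exp (r * t) / 2 := by
          gcongr
          exact setIntegral_mul_comp_sub_le_of_le_mul_exp hg_nonneg hg ht (hkernel t ht)
            (fun s hs => hf_nonneg 0 s (hmem t ht s hs)) hf₀
      _ = C 0 + gronwallCoeff C M 0 * exp (r * t) := by rw [gronwallCoeff_zero]; ring
  | succ n ih =>
    intro t ht
    have hfn : ∀ s ∈ Icc 0 t, f (n + 1) s ≤ (C n + gronwallCoeff C M n) * exp (r * s) :=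
      fun s hs =>
      have hs := hmem t ht s hs
      calc f (n + 1) s ≤ C n + gronwallCoeff C M n * exp (r * s) := ih s hs
        _ ≤ C n * exp (r * s) + gronwallCoeff C M n * exp (r * s) := by
            gcongr
            exact le_mul_of_one_le_right (hC n) (hexp s hs)
        _ = (C n + gronwallCoeff C M n) * exp (r * s) := (add_mul _ _ _).symm
    calc f (n + 1 + 1) t ≤ C (n + 1) + ∫ s in Icc 0 t, f (n + 1) s * g (t - s) :=
          hrec (n + 1) t ht
      _ ≤ C (n + 1) + (C n + gronwallCoeff C M n) * exp (r * t) / 2 := by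
          gcongr
          exact setIntegral_mul_comp_sub_le_of_le_mul_exp hg_nonneg hg ht (hkernel t ht)
            (fun s hs => hf_nonneg _ s (hmem t ht s hs)) hfn
      _ = C (n + 1) + gronwallCoeff C M (n + 1) * exp (r * t) := by
          rw [gronwallCoeff_succ]; ring

theorem stmt_0_general (T : ℝ) (g : ℝ → ℝ)
    (hg_nonneg : ∀ t ∈ Icc (0 : ℝ) T, 0 ≤ g t)
    (hg_int : IntegrableOn g (Icc (0 : ℝ) T))
    (C : ℕ → ℝ) (hC : ∀ n, 0 ≤ C n)
    (f : ℕ → ℝ → ℝ)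
    (hf_nonneg : ∀ n, ∀ t ∈ Icc (0 : ℝ) T, 0 ≤ f n t)
    (M : ℝ) (hM : ∀ t ∈ Icc (0 : ℝ) T, f 0 t ≤ M)
    (hrec : ∀ n, ∀ t ∈ Icc (0 : ℝ) T,
      f (n + 1) t ≤ C n + ∫ s in Icc (0 : ℝ) t, f n s * g (t - s)) :
    ∃ a : ℕ → ℝ, (∀ n, 0 ≤ a n) ∧
      (∀ p : ℝ, 1 < p → Summable (fun n : ℕ => a (n + 1) ^ (1 / p))) ∧
      ∀ n, ∀ t ∈ Icc (0 : ℝ) T,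
        f (n + 1) t ≤ C n + (∑ j ∈ Finset.Icc 1 n, C (n - j) * a j) + M * a (n + 1) := by
  obtain ⟨r, hr, hkernel⟩ := exists_setIntegral_exp_mul_comp_sub_le_half hg_nonneg hg_int
  refine ⟨fun j => 2⁻¹ ^ j * exp (r * T), fun j => by positivity, fun p hp => ?_,
    fun n t ht => ?_⟩
  · exact (summable_nat_add_iff 1).2
      (summable_pow_mul_rpow (by norm_num) (by norm_num) (exp_pos _).le (by positivity))
  · have hM₀ : 0 ≤ M := (hf_nonneg 0 t ht).trans (hM t ht)
    calc f (n + 1) t ≤ C n + gronwallCoeff C M n * exp (r * t) :=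
          le_add_gronwallCoeff_mul_exp hg_nonneg hg_int hr hkernel hC hf_nonneg hM hrec n t ht
      _ ≤ C n + gronwallCoeff C M n * exp (r * T) := by
          gcongr
          · exact gronwallCoeff_nonneg hC hM₀ n
          · exact ht.2
      _ = C n + (∑ j ∈ Finset.Icc 1 n, C (n - j) * (2⁻¹ ^ j * exp (r * T)))
            + M * (2⁻¹ ^ (n + 1) * exp (r * T)) := by
          simp only [gronwallCoeff, add_mul, Finset.sum_mul, mul_assoc]; ring

/-- Gronwall-type Lemma A.1 (first assertion): if `f_{n+1}(t) ≤ C_n + ∫₀ᵗ f_n(s) g(t-s) ds`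
on `[0,T]`, then there exist non-negative constants `(a_n)_{n≥1}` with
`Σ_{n≥1} a_n^{1/p} < ∞` for every `p > 1`, such that
`f_n(t) ≤ C_{n-1} + Σ_{j=1}^{n-1} C_{n-1-j} a_j + M a_n` for all `n ≥ 1`, `t ∈ [0,T]`. -/
theorem stmt_0 (T : ℝ) (hT : 0 < T) (g : ℝ → ℝ) (hg_meas : Measurable g)
    (hg_nonneg : ∀ t ∈ Icc (0 : ℝ) T, 0 ≤ g t)
    (hg_int : IntegrableOn g (Icc (0 : ℝ) T))
    (C : ℕ → ℝ) (hC : ∀ n, 0 ≤ C n)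
    (f : ℕ → ℝ → ℝ) (hf_meas : ∀ n, Measurable (f n))
    (hf_nonneg : ∀ n, ∀ t ∈ Icc (0 : ℝ) T, 0 ≤ f n t)
    (M : ℝ) (hM : ∀ t ∈ Icc (0 : ℝ) T, f 0 t ≤ M)
    (hrec : ∀ n, ∀ t ∈ Icc (0 : ℝ) T,
      f (n + 1) t ≤ C n + ∫ s in Icc (0 : ℝ) t, f n s * g (t - s)) :
    ∃ a : ℕ → ℝ, (∀ n, 0 ≤ a n) ∧
      (∀ p : ℝ, 1 < p → Summable (fun n : ℕ => a (n + 1) ^ (1 / p))) ∧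
      ∀ n, ∀ t ∈ Icc (0 : ℝ) T,
        f (n + 1) t ≤ C n + (∑ j ∈ Finset.Icc 1 n, C (n - j) * a j) + M * a (n + 1) :=
  stmt_0_general T g hg_nonneg hg_int C hC f hf_nonneg M hM hrec
end

section
/- Let T > 0, let g : [0,T] → [0,∞) be measurable with ∫₀ᵀ g(t) dt < ∞, let (C_n)_{n≥0} be non-negative constants, and let (f_n)_{n≥0} be non-negative measurable functions on [0,T] with sup_{t∈[0,T]} f_0(t) < ∞ and f_{n+1}(t) ≤ C_n + ∫₀ᵗ f_n(s) g(t−s) ds for every n ≥ 0 and t ∈ [0,T]. If Σ_{n≥0} C_n^{1/p} < ∞ for some p > 1, then Σ_{n≥1} (sup_{t∈[0,T]} f_n(t))^{1/p} < ∞. -/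
/-!
Weight time by `exp (l t)`. Since `∫₀ᵀ e^{-lu} g(u) du → 0` as `l → ∞` (dominated convergence),
some `l` makes this integral a number `ρ < 1`, and then `f_n(s) ≤ B e^{ls}` implies
`∫₀ᵗ f_n(s) g(t-s) ds ≤ ρ B e^{lt}`. Hence `f_n(t) ≤ b_n e^{lt}` for the sequence
`b_{n+1} = C_n + ρ b_n`, and subadditivity of `x ↦ x^{1/p}` gives
`b_{n+1}^{1/p} ≤ C_n^{1/p} + ρ^{1/p} b_n^{1/p}` with `ρ^{1/p} < 1`, so `∑ b_n^{1/p} < ∞`.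
-/

open MeasureTheory Set Filter Topology

theorem Summable.of_le_add_mul {u c : ℕ → ℝ} {r : ℝ} (hu : ∀ n, 0 ≤ u n) (hc : Summable c)
    (hc0 : ∀ n, 0 ≤ c n) (hr0 : 0 ≤ r) (hr1 : r < 1) (hrec : ∀ n, u (n + 1) ≤ c n + r * u n) :
    Summable u := by
  set A := u 0 + ∑' n, c n
  have hS : ∀ N, ∑ n ∈ Finset.range N, u n ≤ A + r * ∑ n ∈ Finset.range N, u n := by
    rintro (_ | N)
    · simpa [A] using add_nonneg (hu 0) (tsum_nonneg hc0)
    have hmono : ∑ n ∈ Finset.range N, u n ≤ ∑ n ∈ Finset.range (N + 1), u n :=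
      Finset.sum_le_sum_of_subset_of_nonneg (Finset.range_subset_range.2 N.le_succ)
        fun n _ _ => hu n
    have hstep : ∑ n ∈ Finset.range N, u (n + 1) ≤
        ∑ n ∈ Finset.range N, c n + r * ∑ n ∈ Finset.range N, u n := by
      rw [Finset.mul_sum, ← Finset.sum_add_distrib]
      exact Finset.sum_le_sum fun n _ => hrec n
    have hcN : ∑ n ∈ Finset.range N, c n ≤ ∑' n, c n := hc.sum_le_tsum _ fun n _ => hc0 n
    have hsplit := Finset.sum_range_succ' u N
    linarith [mul_le_mul_of_nonneg_left hmono hr0]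
  refine summable_of_sum_range_le hu (c := A / (1 - r)) fun N => ?_
  rw [le_div_iff₀ (by linarith)]
  linarith [hS N]

theorem tendsto_setIntegral_exp_neg_mul_atTop {g : ℝ → ℝ} {s : Set ℝ} (hs : MeasurableSet s)
    (hs0 : s ⊆ Ici 0) (hg : IntegrableOn g s) :
    Tendsto (fun l => ∫ u in s, Real.exp (-(l * u)) * g u) atTop (𝓝 0) := by
  have hlim : ∀ᵐ u ∂volume.restrict s,
      Tendsto (fun l => Real.exp (-(l * u)) * g u) atTop (𝓝 0) := by
    filter_upwards [ae_restrict_mem hs, ae_restrict_of_ae (Measure.ae_ne volume 0)] with u hus hu0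
    have hu : 0 < u := lt_of_le_of_ne (hs0 hus) (Ne.symm hu0)
    simpa using ((Real.tendsto_exp_neg_atTop_nhds_zero.comp
      (tendsto_id.atTop_mul_const hu)).mul_const (g u))
  have hbound : ∀ᶠ l in atTop, ∀ᵐ u ∂volume.restrict s, ‖Real.exp (-(l * u)) * g u‖ ≤ ‖g u‖ := by
    filter_upwards [eventually_ge_atTop 0] with l hl
    filter_upwards [ae_restrict_mem hs] with u hu
    rw [norm_mul, Real.norm_of_nonneg (Real.exp_nonneg _)]
    exact mul_le_of_le_one_left (norm_nonneg _)
      (Real.exp_le_one_iff.2 (neg_nonpos.2 (mul_nonneg hl (hs0 hu))))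
  simpa using tendsto_integral_filter_of_dominated_convergence (fun u => ‖g u‖)
    (Eventually.of_forall fun l =>
      (by fun_prop : Continuous fun u => Real.exp (-(l * u))).aestronglyMeasurable.mul
        hg.aestronglyMeasurable)
    hbound hg.norm hlim

theorem setIntegral_Icc_comp_sub_left {E : Type*} [NormedAddCommGroup E] [NormedSpace ℝ E]
    (h : ℝ → E) (t : ℝ) : ∫ s in Icc 0 t, h (t - s) = ∫ s in Icc 0 t, h s := by
  simpa [preimage_const_sub_Icc] using
    (Measure.measurePreserving_sub_left volume t).setIntegral_preimage_emb
      (Homeomorph.subLeft t).measurableEmbedding h (Icc 0 t)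

theorem MeasureTheory.IntegrableOn.comp_sub_left_Icc {E : Type*} [NormedAddCommGroup E]
    {h : ℝ → E} {t : ℝ} (hh : IntegrableOn h (Icc 0 t)) :
    IntegrableOn (fun s => h (t - s)) (Icc 0 t) := by
  have := ((Measure.measurePreserving_sub_left volume t).integrableOn_comp_preimage
    (Homeomorph.subLeft t).measurableEmbedding (s := Icc 0 t)).2 hh
  simpa [preimage_const_sub_Icc, Function.comp_def] using this

theorem setIntegral_mul_comp_sub_le_mul_exp {f g : ℝ → ℝ} {t l B : ℝ}
    (hg : IntegrableOn g (Icc 0 t)) (hg0 : ∀ u ∈ Icc 0 t, 0 ≤ g u)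
    (hf0 : ∀ s ∈ Icc 0 t, 0 ≤ f s) (hfB : ∀ s ∈ Icc 0 t, f s ≤ B * Real.exp (l * s)) :
    ∫ s in Icc 0 t, f s * g (t - s) ≤
      B * Real.exp (l * t) * ∫ u in Icc 0 t, Real.exp (-(l * u)) * g u := by
  have hrefl : ∀ s ∈ Icc 0 t, t - s ∈ Icc 0 t := fun s hs =>
    ⟨by linarith [hs.2], by linarith [hs.1]⟩
  have hmaj : IntegrableOn (fun s => B * Real.exp (l * s) * g (t - s)) (Icc 0 t) :=
    hg.comp_sub_left_Icc.continuousOn_mul (by fun_prop) isCompact_Icc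
  calc ∫ s in Icc 0 t, f s * g (t - s)
      ≤ ∫ s in Icc 0 t, B * Real.exp (l * s) * g (t - s) := by
        refine integral_mono_of_nonneg ?_ hmaj ?_ <;>
          filter_upwards [ae_restrict_mem measurableSet_Icc] with s hs
        · exact mul_nonneg (hf0 s hs) (hg0 _ (hrefl s hs))
        · exact mul_le_mul_of_nonneg_right (hfB s hs) (hg0 _ (hrefl s hs))
    _ = ∫ u in Icc 0 t, B * Real.exp (l * (t - u)) * g u := by
        rw [← setIntegral_Icc_comp_sub_left]
        simp only [sub_sub_cancel]
    _ = B * Real.exp (l * t) * ∫ u in Icc 0 t, Real.exp (-(l * u)) * g u := by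
        rw [← integral_const_mul]
        congr 1 with u
        rw [mul_sub, sub_eq_add_neg, Real.exp_add]
        ring

def affineRecSeq (M ρ : ℝ) (C : ℕ → ℝ) : ℕ → ℝ
  | 0 => M
  | n + 1 => C n + ρ * affineRecSeq M ρ C n

namespace affineRecSeq

variable {M ρ : ℝ} {C : ℕ → ℝ}

theorem nonneg (hM : 0 ≤ M) (hρ : 0 ≤ ρ) (hC : ∀ n, 0 ≤ C n) (n : ℕ) :
    0 ≤ affineRecSeq M ρ C n := by
  induction n with
  | zero => exact hM
  | succ n ih => exact add_nonneg (hC n) (mul_nonneg hρ ih)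

theorem summable_rpow {q : ℝ} (hM : 0 ≤ M) (hρ0 : 0 ≤ ρ) (hρ1 : ρ < 1) (hC : ∀ n, 0 ≤ C n)
    (hq0 : 0 < q) (hq1 : q ≤ 1) (hCq : Summable fun n => C n ^ q) :
    Summable fun n => affineRecSeq M ρ C n ^ q := by
  refine Summable.of_le_add_mul (fun n => Real.rpow_nonneg (nonneg hM hρ0 hC n) q) hCq
    (fun n => Real.rpow_nonneg (hC n) q) (Real.rpow_nonneg hρ0 q)
    (Real.rpow_lt_one hρ0 hρ1 hq0) fun n => ?_
  rw [← Real.mul_rpow hρ0 (nonneg hM hρ0 hC n)]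
  exact Real.rpow_add_le_add_rpow (hC n) (mul_nonneg hρ0 (nonneg hM hρ0 hC n)) hq0.le hq1

end affineRecSeq

theorem le_affineRecSeq_mul_exp {T l M ρ : ℝ} {g : ℝ → ℝ} {C : ℕ → ℝ} {f : ℕ → ℝ → ℝ}
    (hg_nonneg : ∀ t ∈ Icc 0 T, 0 ≤ g t) (hg_int : IntegrableOn g (Icc 0 T))
    (hC : ∀ n, 0 ≤ C n) (hf_nonneg : ∀ n, ∀ t ∈ Icc 0 T, 0 ≤ f n t)
    (hM : 0 ≤ M) (hf0 : ∀ t ∈ Icc 0 T, f 0 t ≤ M)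
    (hrec : ∀ n, ∀ t ∈ Icc 0 T, f (n + 1) t ≤ C n + ∫ s in Icc 0 t, f n s * g (t - s))
    (hl : 0 ≤ l) (hρ : ∫ u in Icc 0 T, Real.exp (-(l * u)) * g u ≤ ρ) (n : ℕ) :
    ∀ t ∈ Icc 0 T, f n t ≤ affineRecSeq M ρ C n * Real.exp (l * t) := by
  have hsub : ∀ {t}, t ∈ Icc 0 T → Icc 0 t ⊆ Icc 0 T := fun ht => Icc_subset_Icc_right ht.2
  have hweight_le : ∀ t ∈ Icc 0 T, ∫ u in Icc 0 t, Real.exp (-(l * u)) * g u ≤ ρ := by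
    intro t ht
    refine le_trans (setIntegral_mono_set ?_ ?_ (hsub ht).eventuallyLE) hρ
    · exact hg_int.continuousOn_mul (by fun_prop) isCompact_Icc
    · filter_upwards [ae_restrict_mem measurableSet_Icc] with u hu
      exact mul_nonneg (Real.exp_nonneg _) (hg_nonneg u hu)
  have hρ0 : 0 ≤ ρ := le_trans (setIntegral_nonneg measurableSet_Icc fun u hu =>
    mul_nonneg (Real.exp_nonneg _) (hg_nonneg u hu)) hρ
  induction n with
  | zero =>
    intro t ht
    exact (hf0 t ht).trans (le_mul_of_one_le_right hM (Real.one_le_exp (mul_nonneg hl ht.1)))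
  | succ n ih =>
    intro t ht
    have hb := affineRecSeq.nonneg hM hρ0 hC n
    have hconv := setIntegral_mul_comp_sub_le_mul_exp (hg_int.mono_set (hsub ht))
      (fun u hu => hg_nonneg u (hsub ht hu)) (fun s hs => hf_nonneg n s (hsub ht hs))
      (fun s hs => ih s (hsub ht hs))
    have hweight := mul_le_mul_of_nonneg_left (hweight_le t ht)
      (mul_nonneg hb (Real.exp_nonneg (l * t)))
    have hCexp : C n ≤ C n * Real.exp (l * t) :=
      le_mul_of_one_le_right (hC n) (Real.one_le_exp (mul_nonneg hl ht.1))
    calc f (n + 1) t ≤ C n + affineRecSeq M ρ C n * Real.exp (l * t) * ρ := by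
          linarith [hrec n t ht]
      _ ≤ affineRecSeq M ρ C (n + 1) * Real.exp (l * t) := by
          simp only [affineRecSeq]
          linarith

theorem sSup_image_Icc_le_mul_exp {φ : ℝ → ℝ} {T l B : ℝ} (hl : 0 ≤ l) (hB : 0 ≤ B)
    (hφ : ∀ t ∈ Icc 0 T, φ t ≤ B * Real.exp (l * t)) :
    sSup (φ '' Icc 0 T) ≤ B * Real.exp (l * T) := by
  refine Real.sSup_le ?_ (mul_nonneg hB (Real.exp_nonneg _))
  rintro _ ⟨t, ht, rfl⟩
  exact (hφ t ht).trans <| mul_le_mul_of_nonneg_left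
    (Real.exp_le_exp.2 (mul_le_mul_of_nonneg_left ht.2 hl)) hB

theorem stmt_1_general (T : ℝ) (g : ℝ → ℝ)
    (hg_nonneg : ∀ t ∈ Icc (0 : ℝ) T, 0 ≤ g t)
    (hg_int : IntegrableOn g (Icc (0 : ℝ) T))
    (C : ℕ → ℝ) (hC : ∀ n, 0 ≤ C n)
    (f : ℕ → ℝ → ℝ)
    (hf_nonneg : ∀ n, ∀ t ∈ Icc (0 : ℝ) T, 0 ≤ f n t)
    (hf0_bdd : BddAbove (f 0 '' Icc (0 : ℝ) T))
    (hrec : ∀ n, ∀ t ∈ Icc (0 : ℝ) T,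
      f (n + 1) t ≤ C n + ∫ s in Icc (0 : ℝ) t, f n s * g (t - s))
    (p : ℝ) (hp : 1 < p)
    (hCsum : Summable (fun n : ℕ => C n ^ (1 / p))) :
    Summable (fun n : ℕ => (sSup (f (n + 1) '' Icc (0 : ℝ) T)) ^ (1 / p)) := by
  have hq0 : 0 < 1 / p := by positivity
  have hq1 : 1 / p ≤ 1 := (div_le_one (by linarith)).2 hp.le
  obtain ⟨l, hl, hρ1⟩ : ∃ l, 0 ≤ l ∧ ∫ u in Icc 0 T, Real.exp (-(l * u)) * g u < 1 :=
    ((eventually_ge_atTop 0).and ((tendsto_setIntegral_exp_neg_mul_atTop measurableSet_Icc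
      (fun u hu => hu.1) hg_int).eventually (gt_mem_nhds one_pos))).exists
  set ρ := ∫ u in Icc 0 T, Real.exp (-(l * u)) * g u
  have hρ0 : 0 ≤ ρ := setIntegral_nonneg measurableSet_Icc fun u hu =>
    mul_nonneg (Real.exp_nonneg _) (hg_nonneg u hu)
  set M := sSup (f 0 '' Icc 0 T)
  have hM : 0 ≤ M := Real.sSup_nonneg <| by rintro _ ⟨t, ht, rfl⟩; exact hf_nonneg 0 t ht
  set b := affineRecSeq M ρ C
  have hb : ∀ n, 0 ≤ b n := affineRecSeq.nonneg hM hρ0 hC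
  have hf_le : ∀ n, ∀ t ∈ Icc 0 T, f n t ≤ b n * Real.exp (l * t) :=
    le_affineRecSeq_mul_exp hg_nonneg hg_int hC hf_nonneg hM
      (fun t ht => le_csSup hf0_bdd ⟨t, ht, rfl⟩) hrec hl le_rfl
  have hsup_le : ∀ n, sSup (f n '' Icc 0 T) ≤ b n * Real.exp (l * T) := fun n =>
    sSup_image_Icc_le_mul_exp hl (hb n) (hf_le n)
  have hsup_nonneg : ∀ n, 0 ≤ sSup (f n '' Icc 0 T) := fun n =>
    Real.sSup_nonneg <| by rintro _ ⟨t, ht, rfl⟩; exact hf_nonneg n t ht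
  refine Summable.of_nonneg_of_le (fun n => Real.rpow_nonneg (hsup_nonneg _) _) (fun n => ?_)
    (((summable_nat_add_iff 1).2 (affineRecSeq.summable_rpow hM hρ0 hρ1 hC hq0 hq1
      hCsum)).mul_right (Real.exp (l * T) ^ (1 / p)))
  rw [← Real.mul_rpow (hb _) (Real.exp_nonneg _)]
  exact Real.rpow_le_rpow (hsup_nonneg _) (hsup_le _) hq0.le

/-- Gronwall-type Lemma A.1 (second assertion): under the convolution recursion
`f_{n+1}(t) ≤ C_n + ∫₀ᵗ f_n(s) g(t-s) ds`, if `Σ_{n≥0} C_n^{1/p} < ∞` for some `p > 1`,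
then `Σ_{n≥1} (sup_{t∈[0,T]} f_n(t))^{1/p} < ∞`. -/
theorem stmt_1 (T : ℝ) (hT : 0 < T) (g : ℝ → ℝ) (hg_meas : Measurable g)
    (hg_nonneg : ∀ t ∈ Icc (0 : ℝ) T, 0 ≤ g t)
    (hg_int : IntegrableOn g (Icc (0 : ℝ) T))
    (C : ℕ → ℝ) (hC : ∀ n, 0 ≤ C n)
    (f : ℕ → ℝ → ℝ) (hf_meas : ∀ n, Measurable (f n))
    (hf_nonneg : ∀ n, ∀ t ∈ Icc (0 : ℝ) T, 0 ≤ f n t)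
    (hf0_bdd : BddAbove (f 0 '' Icc (0 : ℝ) T))
    (hrec : ∀ n, ∀ t ∈ Icc (0 : ℝ) T,
      f (n + 1) t ≤ C n + ∫ s in Icc (0 : ℝ) t, f n s * g (t - s))
    (p : ℝ) (hp : 1 < p)
    (hCsum : Summable (fun n : ℕ => C n ^ (1 / p))) :
    Summable (fun n : ℕ => (sSup (f (n + 1) '' Icc (0 : ℝ) T)) ^ (1 / p)) :=
  stmt_1_general T g hg_nonneg hg_int C hC f hf_nonneg hf0_bdd hrec p hp hCsum
end

section
/- Let T > 0 and let g : [0,T] → [0,∞) be measurable with G(T) := ∫₀ᵀ g(t) dt ∈ (0,∞). Let (X_i)_{i≥1} be independent identically distributed random variables with values in [0,T] whose common law has density g(t)/G(T) with respect to Lebesgue measure on [0,T], and set S_n = X_1 + ⋯ + X_n and a_n = G(T)^n P(S_n ≤ T). Then Σ_{n≥1} a_n^{1/p} < ∞ for every p ≥ 1. -/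
/-!
By the exponential Chebyshev (Chernoff) bound and independence, for every `θ ≥ 0`,
`a_n ≤ e^{θT} (G(T) m(θ))^n` with `m(θ) = E[e^{-θ X_1}]`. As `X_1 > 0` almost surely
(its law has a density), dominated convergence gives `m(θ) → 0` as `θ → ∞`, so for large `θ`
the `a_n`, hence the `a_n^{1/p}`, are dominated by a convergent geometric series.
-/

open MeasureTheory Set Filter Topology Real Finset ProbabilityTheory

namespace ProbabilityTheory

variable {Ω : Type*} [MeasurableSpace Ω] {μ : Measure Ω}

theorem tendsto_mgf_neg_atTop_of_ae_pos [IsFiniteMeasure μ] {X : Ω → ℝ} (hX : AEMeasurable X μ)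
    (hpos : ∀ᵐ ω ∂μ, 0 < X ω) : Tendsto (fun t => mgf X μ (-t)) atTop (𝓝 0) := by
  have h_lim : ∀ᵐ ω ∂μ, Tendsto (fun t => exp (-t * X ω)) atTop (𝓝 0) := by
    filter_upwards [hpos] with ω hω
    exact tendsto_exp_atBot.comp <| (tendsto_neg_atTop_atBot.atBot_mul_const hω)
  have h_bound : ∀ᶠ t in atTop, ∀ᵐ ω ∂μ, ‖exp (-t * X ω)‖ ≤ 1 := by
    filter_upwards [eventually_ge_atTop 0] with t ht
    filter_upwards [hpos] with ω hω
    rw [norm_of_nonneg (exp_pos _).le, exp_le_one_iff]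
    nlinarith
  simpa only [mgf, integral_zero] using
    tendsto_integral_filter_of_dominated_convergence (fun _ => 1)
      (Eventually.of_forall fun t => aemeasurable_exp_mul _ hX) h_bound (integrable_const 1) h_lim

theorem measureReal_sum_le_le_exp_mul_mgf_pow [IsFiniteMeasure μ] {X : ℕ → Ω → ℝ}
    (h_meas : ∀ i, Measurable (X i)) (h_indep : iIndepFun X μ)
    (hident : ∀ i, IdentDistrib (X i) (X 0) μ μ) {t : ℝ} (ht : t ≤ 0)
    (h_int : ∀ i, Integrable (fun ω => exp (t * X i ω)) μ) (n : ℕ) (ε : ℝ) :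
    μ.real {ω | ∑ i ∈ range n, X i ω ≤ ε} ≤ exp (-t * ε) * mgf (X 0) μ t ^ n := by
  have h_mgf : mgf (∑ i ∈ range n, X i) μ t = mgf (X 0) μ t ^ n := by
    rw [h_indep.mgf_sum h_meas, prod_eq_pow_card fun i _ =>
      mgf_congr_of_identDistrib (X i) (X 0) (hident i) t, card_range]
  simpa [h_mgf] using measure_le_le_exp_mul_mgf (X := ∑ i ∈ range n, X i) ε ht
    (h_indep.integrable_exp_mul_sum h_meas fun i _ => h_int i)

end ProbabilityTheory

theorem summable_rpow_of_le_geometric {a : ℕ → ℝ} {C r q : ℝ} (ha : ∀ n, 0 ≤ a n)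
    (h_le : ∀ n, a n ≤ C * r ^ n) (hr₀ : 0 ≤ r) (hr₁ : r < 1) (hq : 0 < q) :
    Summable fun n => a n ^ q := by
  have hC : 0 ≤ C := by simpa using (ha 0).trans (h_le 0)
  refine Summable.of_nonneg_of_le (fun n => rpow_nonneg (ha n) q) (fun n => ?_)
    ((summable_geometric_of_lt_one (rpow_nonneg hr₀ q) (rpow_lt_one hr₀ hr₁ hq)).mul_left (C ^ q))
  calc a n ^ q ≤ (C * r ^ n) ^ q := rpow_le_rpow (ha n) (h_le n) hq.le
    _ = C ^ q * (r ^ q) ^ n := by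
      rw [mul_rpow hC (pow_nonneg hr₀ n), ← rpow_natCast, ← rpow_natCast, ← rpow_mul hr₀,
        ← rpow_mul hr₀, mul_comm (n : ℝ)]

theorem stmt_3_general {Ω : Type*} [MeasurableSpace Ω] (P : Measure Ω) [IsProbabilityMeasure P]
    (T : ℝ) (g : ℝ → ℝ)
    (GT : ℝ) (hGT_pos : 0 < GT)
    (X : ℕ → Ω → ℝ) (hX_meas : ∀ i, Measurable (X i))
    (hX_range : ∀ i, ∀ ω, X i ω ∈ Icc (0 : ℝ) T)
    (hX_indep : ProbabilityTheory.iIndepFun X P)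
    (hX_law : ∀ i, Measure.map (X i) P
      = (volume.restrict (Icc (0 : ℝ) T)).withDensity (fun t => ENNReal.ofReal (g t / GT)))
    (S : ℕ → Ω → ℝ) (hS : ∀ n ω, S n ω = ∑ i ∈ Finset.range n, X i ω)
    (a : ℕ → ℝ) (ha : ∀ n, a n = GT ^ n * (P {ω | S n ω ≤ T}).toReal) :
    ∀ p : ℝ, 1 ≤ p → Summable (fun n : ℕ => a (n + 1) ^ (1 / p)) := by
  intro p hp
  have hident i : IdentDistrib (X i) (X 0) P P :=
    ⟨(hX_meas i).aemeasurable, (hX_meas 0).aemeasurable, by rw [hX_law, hX_law]⟩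
  have hpos : ∀ᵐ ω ∂P, 0 < X 0 ω := by
    have hac : P.map (X 0) ≪ volume := hX_law 0 ▸ (withDensity_absolutelyContinuous _ _).trans
      (Measure.absolutelyContinuous_of_le Measure.restrict_le_self)
    have hne : ∀ᵐ x ∂P.map (X 0), x ≠ 0 := hac (by simp)
    filter_upwards [ae_of_ae_map (hX_meas 0).aemeasurable hne] with ω hω
    exact (hX_range 0 ω).1.lt_of_ne' hω
  obtain ⟨θ, hθ_mgf, hθ⟩ : ∃ θ, mgf (X 0) P (-θ) < GT⁻¹ ∧ 0 ≤ θ :=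
    (((tendsto_mgf_neg_atTop_of_ae_pos (hX_meas 0).aemeasurable hpos).eventually
      (gt_mem_nhds (inv_pos.2 hGT_pos))).and (eventually_ge_atTop 0)).exists
  have h_int i : Integrable (fun ω => exp (-θ * X i ω)) P :=
    integrable_exp_mul_of_mem_Icc (hX_meas i).aemeasurable (ae_of_all _ (hX_range i))
  have h_le n : a n ≤ exp (θ * T) * (GT * mgf (X 0) P (-θ)) ^ n := by
    rw [ha, mul_pow, mul_left_comm, ← measureReal_def]
    gcongr
    simpa [hS] using
      measureReal_sum_le_le_exp_mul_mgf_pow hX_meas hX_indep hident (neg_nonpos.2 hθ) h_int n T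
  have ha_nonneg n : 0 ≤ a n := by rw [ha]; positivity
  have h_ratio : GT * mgf (X 0) P (-θ) < 1 := by
    rwa [← lt_inv_mul_iff₀ hGT_pos, mul_one]
  exact (summable_nat_add_iff 1).mpr <| summable_rpow_of_le_geometric ha_nonneg h_le
    (mul_nonneg hGT_pos.le mgf_nonneg) h_ratio (one_div_pos.2 (zero_lt_one.trans_le hp))

/-- Summability of the constants `a_n = G(T)^n P(S_n ≤ T)` in the Gronwall-type
Lemma A.1: if `(X_i)` are i.i.d. with density `g/G(T)` on `[0,T]` and
`S_n = X_1 + ⋯ + X_n`, then `Σ_{n≥1} a_n^{1/p} < ∞` for every `p ≥ 1`. -/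
theorem stmt_3 {Ω : Type*} [MeasurableSpace Ω] (P : Measure Ω) [IsProbabilityMeasure P]
    (T : ℝ) (hT : 0 < T) (g : ℝ → ℝ) (hg_meas : Measurable g)
    (hg_nonneg : ∀ t ∈ Icc (0 : ℝ) T, 0 ≤ g t)
    (GT : ℝ) (hGT : GT = ∫ t in Icc (0 : ℝ) T, g t) (hGT_pos : 0 < GT)
    (X : ℕ → Ω → ℝ) (hX_meas : ∀ i, Measurable (X i))
    (hX_range : ∀ i, ∀ ω, X i ω ∈ Icc (0 : ℝ) T)
    (hX_indep : ProbabilityTheory.iIndepFun X P)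
    (hX_law : ∀ i, Measure.map (X i) P
      = (volume.restrict (Icc (0 : ℝ) T)).withDensity (fun t => ENNReal.ofReal (g t / GT)))
    (S : ℕ → Ω → ℝ) (hS : ∀ n ω, S n ω = ∑ i ∈ Finset.range n, X i ω)
    (a : ℕ → ℝ) (ha : ∀ n, a n = GT ^ n * (P {ω | S n ω ≤ T}).toReal) :
    ∀ p : ℝ, 1 ≤ p → Summable (fun n : ℕ => a (n + 1) ^ (1 / p)) :=
  stmt_3_general P T g GT hGT_pos X hX_meas hX_range hX_indep hX_law S hS a ha
end

section
/- Let T > 0, κ ≥ 0, B ≥ 0, and let g : [0,T] → [0,∞) be measurable with ∫₀ᵀ g(t) dt < ∞. Let (V_n)_{n≥0} be non-negative measurable functions on [0,T] with sup_{t∈[0,T]} V_0(t) < ∞, satisfying V_{n+1}(t) ≤ B + κ ∫₀ᵗ V_n(s) g(t−s) ds for every n ≥ 0 and t ∈ [0,T]. Then sup_{n≥0} sup_{t∈[0,T]} V_n(t) < ∞. -/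
open MeasureTheory Set

lemma shift_eq_aux (g : ℝ → ℝ) {t a b : ℝ} (hab : a ≤ b) :
    ∫ s in Icc a b, g (t - s) = ∫ u in Icc (t - b) (t - a), g u := by
  rw [integral_Icc_eq_integral_Ioc, ← intervalIntegral.integral_of_le hab,
    intervalIntegral.integral_comp_sub_left g t,
    intervalIntegral.integral_of_le (by linarith), ← integral_Icc_eq_integral_Ioc]

lemma shift_intble_aux (g : ℝ → ℝ) {t a b : ℝ} (hab : a ≤ b)
    (h : IntegrableOn g (Icc (t - b) (t - a))) :
    IntegrableOn (fun s => g (t - s)) (Icc a b) := by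
  rw [integrableOn_Icc_iff_integrableOn_Ioc, ← intervalIntegrable_iff_integrableOn_Ioc_of_le hab]
  have h' : IntervalIntegrable g volume (t - b) (t - a) := by
    rw [intervalIntegrable_iff_integrableOn_Ioc_of_le (by linarith)]
    exact h.mono_set Ioc_subset_Icc_self
  simpa [sub_sub_cancel] using (h'.comp_sub_left t).symm

/-- Uniform boundedness (Step 2 of Lemma 4.1 of the paper): if
`V_{n+1}(t) ≤ B + κ ∫₀ᵗ V_n(s) g(t-s) ds` on `[0,T]` and `V_0` is bounded, then
`sup_{n≥0} sup_{t∈[0,T]} V_n(t) < ∞`. -/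
theorem stmt_6 (T : ℝ) (hT : 0 < T) (κ : ℝ) (hκ : 0 ≤ κ) (B : ℝ) (hB : 0 ≤ B)
    (g : ℝ → ℝ) (hg_meas : Measurable g)
    (hg_nonneg : ∀ t ∈ Icc (0 : ℝ) T, 0 ≤ g t)
    (hg_int : IntegrableOn g (Icc (0 : ℝ) T))
    (V : ℕ → ℝ → ℝ) (hV_meas : ∀ n, Measurable (V n))
    (hV_nonneg : ∀ n, ∀ t ∈ Icc (0 : ℝ) T, 0 ≤ V n t)
    (hV0_bdd : BddAbove (V 0 '' Icc (0 : ℝ) T))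
    (hrec : ∀ n, ∀ t ∈ Icc (0 : ℝ) T,
      V (n + 1) t ≤ B + κ * ∫ s in Icc (0 : ℝ) t, V n s * g (t - s)) :
    ∃ A : ℝ, ∀ n, ∀ t ∈ Icc (0 : ℝ) T, V n t ≤ A := by
  classical
  obtain ⟨S, hS⟩ := hV0_bdd
  have hV0 : ∀ t ∈ Icc (0 : ℝ) T, V 0 t ≤ S := fun t ht => hS ⟨t, ht, rfl⟩
  set S0 : ℝ := max S 0 with hS0def
  have hS0 : 0 ≤ S0 := le_max_right _ _
  have hV0' : ∀ t ∈ Icc (0 : ℝ) T, V 0 t ≤ S0 := fun t ht =>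
    (hV0 t ht).trans (le_max_left _ _)
  set G : ℝ := ∫ s in Icc (0 : ℝ) T, g s with hGdef
  have hG0 : 0 ≤ G := setIntegral_nonneg measurableSet_Icc hg_nonneg
  -- functional F
  set F : ℝ → ℝ := fun x => ∫ s in Icc (0 : ℝ) x, g s with hFdef
  have hF0 : F 0 = 0 := by
    simp [hFdef, Icc_self, Measure.restrict_singleton]
  -- continuity of the primitive at 0, get δ
  have hcont : ContinuousWithinAt F (Icc (0 : ℝ) T) 0 :=
    (intervalIntegral.continuousOn_primitive_Icc hg_int) 0 ⟨le_rfl, hT.le⟩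
  have hpos : (0 : ℝ) < 1 / (2 * (κ + 1)) := by positivity
  have hev : ∀ᶠ x in nhdsWithin 0 (Icc (0 : ℝ) T), F x < 1 / (2 * (κ + 1)) := by
    have := hcont
    rw [ContinuousWithinAt, hF0] at this
    exact this.eventually_lt_const hpos
  obtain ⟨ε, hε, hball⟩ := Metric.mem_nhdsWithin_iff.1 hev
  set δ : ℝ := min (ε / 2) T with hδdef
  have hδpos : 0 < δ := lt_min (by linarith) hT
  have hδT : δ ≤ T := min_le_right _ _
  have hδlt : F δ < 1 / (2 * (κ + 1)) := by
    apply hball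
    constructor
    · simp only [Metric.mem_ball, Real.dist_eq, sub_zero]
      rw [abs_of_pos hδpos]
      exact (min_le_left _ _).trans_lt (by linarith)
    · exact ⟨hδpos.le, hδT⟩
  have hsmall : κ * F δ ≤ 1 / 2 := by
    have h1 : κ * F δ ≤ κ * (1 / (2 * (κ + 1))) :=
      mul_le_mul_of_nonneg_left hδlt.le hκ
    have h2 : κ * (1 / (2 * (κ + 1))) ≤ 1 / 2 := by
      rw [mul_one_div, div_le_div_iff₀ (by positivity) (by norm_num)]
      nlinarith
    linarith
  have hFδ0 : 0 ≤ F δ :=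
    setIntegral_nonneg measurableSet_Icc fun s hs =>
      hg_nonneg s ⟨hs.1, hs.2.trans hδT⟩
  -- integral over the degenerate interval is zero
  have hzero : ∀ n, (∫ s in Icc (0 : ℝ) 0, V n s * g (0 - s)) = 0 := by
    intro n
    simp [Icc_self, Measure.restrict_singleton]
  -- main claim by induction on k
  have claim : ∀ k : ℕ, ∃ A : ℝ, 0 ≤ A ∧
      ∀ n, ∀ t ∈ Icc (0 : ℝ) T, t ≤ (k : ℝ) * δ → V n t ≤ A := by
    intro k
    induction k with
    | zero =>
      refine ⟨max S0 B, le_trans hS0 (le_max_left _ _), ?_⟩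
      intro n
      induction n with
      | zero => intro t ht _; exact (hV0' t ht).trans (le_max_left _ _)
      | succ n ih =>
        intro t ht htk
        have ht0 : t = 0 := le_antisymm (by simpa using htk) ht.1
        subst ht0
        have := hrec n 0 ht
        rw [hzero n] at this
        calc V (n+1) 0 ≤ B + κ * 0 := by simpa using this
          _ ≤ max S0 B := by simp [le_max_right]
    | succ k ihk =>
      obtain ⟨A, hA0, hA⟩ := ihk
      set R : ℝ := max S0 (2 * (B + κ * (A * G))) with hRdef
      have hR0 : 0 ≤ R := le_trans hS0 (le_max_left _ _)
      have hR2 : 2 * (B + κ * (A * G)) ≤ R := le_max_right _ _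
      refine ⟨R, hR0, ?_⟩
      intro n
      induction n with
      | zero => intro t ht _; exact (hV0' t ht).trans (le_max_left _ _)
      | succ n ih =>
        intro t ht htk
        have ht0 : (0 : ℝ) ≤ t := ht.1
        have htT : t ≤ T := ht.2
        set p : ℝ := max (t - δ) 0 with hpdef
        have hp0 : 0 ≤ p := le_max_right _ _
        have hpt : p ≤ t := max_le (by linarith) ht0
        have hpk : p ≤ (k : ℝ) * δ := by
          have hk0 : 0 ≤ (k : ℝ) * δ := by positivity
          have : t - δ ≤ (k : ℝ) * δ := by
            push_cast at htk; linarith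
          exact max_le this hk0
        have htp : t - p ≤ δ := by
          have := le_max_left (t - δ) 0
          linarith
        have htppos : 0 ≤ t - p := by linarith
        -- integrability of g(t - ·) on Icc 0 t
        have hgt_int : IntegrableOn (fun s => g (t - s)) (Icc 0 t) := by
          apply shift_intble_aux g ht0
        -- range of g(t - ·) is in [0, T]
          simp only [sub_zero, sub_self]
          exact hg_int.mono_set (Icc_subset_Icc le_rfl htT)
        have hgt_nonneg : ∀ s ∈ Icc (0 : ℝ) t, 0 ≤ g (t - s) := fun s hs =>
          hg_nonneg (t - s) ⟨by linarith [hs.2], by linarith [hs.1]⟩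
        have hVn_nonneg : ∀ s ∈ Icc (0 : ℝ) t, 0 ≤ V n s := fun s hs =>
          hV_nonneg n s ⟨hs.1, hs.2.trans htT⟩
        have hVnR : ∀ s ∈ Icc (0 : ℝ) t, V n s ≤ R := fun s hs =>
          ih s ⟨hs.1, hs.2.trans htT⟩ (hs.2.trans htk)
        -- integrability of the integrand
        have hf_meas : Measurable fun s => V n s * g (t - s) :=
          (hV_meas n).mul (hg_meas.comp (measurable_const.sub measurable_id))
        have hf_int : IntegrableOn (fun s => V n s * g (t - s)) (Icc 0 t) := by
          apply Integrable.mono' (hgt_int.const_mul R) hf_meas.aestronglyMeasurable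
          refine (ae_restrict_iff' measurableSet_Icc).2 (Filter.Eventually.of_forall ?_)
          intro s hs
          have h1 := hVn_nonneg s hs
          have h2 := hgt_nonneg s hs
          have h3 := hVnR s hs
          rw [Real.norm_eq_abs, abs_of_nonneg (mul_nonneg h1 h2)]
          exact mul_le_mul_of_nonneg_right h3 h2
        -- split the integral
        have hsplit : (∫ s in Icc (0 : ℝ) t, V n s * g (t - s)) =
            (∫ s in Icc (0 : ℝ) p, V n s * g (t - s)) +
            ∫ s in Ioc p t, V n s * g (t - s) := by
          rw [← setIntegral_union (by rw [Set.disjoint_left]; rintro x hx hx2; exact absurd hx.2 (not_le.2 hx2.1)) measurableSet_Ioc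
            (hf_int.mono_set (Icc_subset_Icc le_rfl hpt))
            (hf_int.mono_set ((Ioc_subset_Icc_self).trans (Icc_subset_Icc hp0 le_rfl))),
            Icc_union_Ioc_eq_Icc hp0 hpt]
        -- first piece
        have hpiece1 : (∫ s in Icc (0 : ℝ) p, V n s * g (t - s)) ≤ A * G := by
          have hint1 : IntegrableOn (fun s => g (t - s)) (Icc 0 p) :=
            hgt_int.mono_set (Icc_subset_Icc le_rfl hpt)
          have step1 : (∫ s in Icc (0 : ℝ) p, V n s * g (t - s)) ≤
              ∫ s in Icc (0 : ℝ) p, A * g (t - s) := by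
            apply setIntegral_mono_on
              (hf_int.mono_set (Icc_subset_Icc le_rfl hpt))
              (hint1.const_mul A) measurableSet_Icc
            intro s hs
            have hsIcc : s ∈ Icc (0 : ℝ) t := ⟨hs.1, hs.2.trans hpt⟩
            exact mul_le_mul_of_nonneg_right
              (hA n s ⟨hs.1, hsIcc.2.trans htT⟩ (hs.2.trans hpk))
              (hgt_nonneg s hsIcc)
          have step2 : (∫ s in Icc (0 : ℝ) p, A * g (t - s)) = A * ∫ s in Icc (0 : ℝ) p, g (t - s) :=
            integral_const_mul A _
          have step3 : (∫ s in Icc (0 : ℝ) p, g (t - s)) = ∫ u in Icc (t - p) (t - 0), g u :=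
            shift_eq_aux g hp0
          have step4 : (∫ u in Icc (t - p) (t - 0), g u) ≤ G := by
            apply setIntegral_mono_set hg_int
            · exact (ae_restrict_iff' measurableSet_Icc).2
                (Filter.Eventually.of_forall hg_nonneg)
            · apply HasSubset.Subset.eventuallyLE
              exact Icc_subset_Icc (by linarith) (by simpa using htT)
          calc (∫ s in Icc (0 : ℝ) p, V n s * g (t - s))
              ≤ ∫ s in Icc (0 : ℝ) p, A * g (t - s) := step1
            _ = A * ∫ s in Icc (0 : ℝ) p, g (t - s) := step2
            _ ≤ A * G := by rw [step3]; exact mul_le_mul_of_nonneg_left step4 hA0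
        -- second piece
        have hpiece2 : (∫ s in Ioc p t, V n s * g (t - s)) ≤ R * F δ := by
          have heq : (∫ s in Ioc p t, V n s * g (t - s)) =
              ∫ s in Icc p t, V n s * g (t - s) := integral_Icc_eq_integral_Ioc.symm
          have hint2 : IntegrableOn (fun s => g (t - s)) (Icc p t) :=
            hgt_int.mono_set (Icc_subset_Icc hp0 le_rfl)
          have step1 : (∫ s in Icc p t, V n s * g (t - s)) ≤
              ∫ s in Icc p t, R * g (t - s) := by
            apply setIntegral_mono_on
              (hf_int.mono_set (Icc_subset_Icc hp0 le_rfl))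
              (hint2.const_mul R) measurableSet_Icc
            intro s hs
            have hsIcc : s ∈ Icc (0 : ℝ) t := ⟨hp0.trans hs.1, hs.2⟩
            exact mul_le_mul_of_nonneg_right (hVnR s hsIcc) (hgt_nonneg s hsIcc)
          have step3 : (∫ s in Icc p t, g (t - s)) = ∫ u in Icc (t - t) (t - p), g u :=
            shift_eq_aux g hpt
          have step4 : (∫ u in Icc (t - t) (t - p), g u) ≤ F δ := by
            apply setIntegral_mono_set
              (hg_int.mono_set (Icc_subset_Icc le_rfl hδT))
            · exact (ae_restrict_iff' measurableSet_Icc).2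
                (Filter.Eventually.of_forall fun s hs =>
                  hg_nonneg s ⟨hs.1, hs.2.trans hδT⟩)
            · apply HasSubset.Subset.eventuallyLE
              exact Icc_subset_Icc (by simp) (by simpa using htp)
          calc (∫ s in Ioc p t, V n s * g (t - s))
              = ∫ s in Icc p t, V n s * g (t - s) := heq
            _ ≤ ∫ s in Icc p t, R * g (t - s) := step1
            _ = R * ∫ s in Icc p t, g (t - s) := integral_const_mul R _
            _ ≤ R * F δ := by rw [step3]; exact mul_le_mul_of_nonneg_left step4 hR0
        -- conclude
        have hrec' := hrec n t ht
        have hI : (∫ s in Icc (0 : ℝ) t, V n s * g (t - s)) ≤ A * G + R * F δ := by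
          rw [hsplit]; linarith
        have hκI : κ * (∫ s in Icc (0 : ℝ) t, V n s * g (t - s)) ≤
            κ * (A * G) + R * (κ * F δ) := by
          have := mul_le_mul_of_nonneg_left hI hκ
          nlinarith
        have hhalf : R * (κ * F δ) ≤ R * (1 / 2) :=
          mul_le_mul_of_nonneg_left hsmall hR0
        calc V (n + 1) t ≤ B + κ * ∫ s in Icc (0 : ℝ) t, V n s * g (t - s) := hrec'
          _ ≤ B + κ * (A * G) + R * (1 / 2) := by linarith
          _ ≤ R := by linarith
  -- finish: pick k with T ≤ k * δ
  obtain ⟨K, hK⟩ := exists_nat_ge (T / δ)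
  have hTK : T ≤ (K : ℝ) * δ := by
    rw [div_le_iff₀ hδpos] at hK
    linarith
  obtain ⟨A, _, hA⟩ := claim K
  exact ⟨A, fun n t ht => hA n t ht (ht.2.trans hTK)⟩
end

section
/- Let T > 0 and let g : [0,T] → [0,∞) be measurable with ∫₀ᵀ g(t) dt < ∞. Let H : [0,T] → [0,∞) be measurable and bounded, and suppose H(t) ≤ ∫₀ᵗ H(s) g(t−s) ds for every t ∈ [0,T]. Then H(t) = 0 for every t ∈ [0,T]. -/
/-!
Weighting by `e^{-rt}` preserves the convolution inequality and replaces the kernel `g` by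
`e^{-ru} g(u)`, whose integral over `[0,T]` tends to `0` as `r → ∞` by dominated convergence.
Once that integral `c` is below `1`, the supremum `M` of the weighted function satisfies
`M ≤ c M`, so `M = 0`.
-/

open MeasureTheory Set Filter Topology

section Reflection

variable {E : Type*} [NormedAddCommGroup E] {f : ℝ → E} {a b : ℝ}

theorem MeasureTheory.IntegrableOn.comp_sub_left_Icc_s7 (hf : IntegrableOn f (Icc a b)) (c : ℝ) :
    IntegrableOn (fun x ↦ f (c - x)) (Icc (c - b) (c - a)) := by
  rcases le_or_gt a b with hab | hab
  · rw [← intervalIntegrable_iff_integrableOn_Icc_of_le hab] at hf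
    rw [← intervalIntegrable_iff_integrableOn_Icc_of_le (by linarith)]
    simpa using (hf.comp_sub_left c).symm
  · simp [Icc_eq_empty_of_lt (show c - a < c - b by linarith)]

theorem setIntegral_Icc_comp_sub_left_s7 [NormedSpace ℝ E] (f : ℝ → E) (hab : a ≤ b) (c : ℝ) :
    ∫ x in Icc a b, f (c - x) = ∫ x in Icc (c - b) (c - a), f x := by
  rw [integral_Icc_eq_integral_Ioc, integral_Icc_eq_integral_Ioc,
    ← intervalIntegral.integral_of_le hab, ← intervalIntegral.integral_of_le (by linarith),
    intervalIntegral.integral_comp_sub_left]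

end Reflection

theorem tendsto_setIntegral_exp_neg_mul_mul_atTop {g : ℝ → ℝ} {s : Set ℝ}
    (hs : MeasurableSet s) (hs0 : s ⊆ Ici 0) (hg : IntegrableOn g s) :
    Tendsto (fun r ↦ ∫ u in s, Real.exp (-r * u) * g u) atTop (𝓝 0) := by
  have hlim : ∀ᵐ u ∂volume.restrict s,
      Tendsto (fun r ↦ Real.exp (-r * u) * g u) atTop (𝓝 0) := by
    have hne : ∀ᵐ u ∂volume.restrict s, u ≠ 0 := ae_restrict_of_ae (by simp [ae_iff])
    filter_upwards [hne, ae_restrict_mem hs] with u hu hus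
    have hu0 : 0 < u := lt_of_le_of_ne (hs0 hus) (Ne.symm hu)
    simpa using ((Real.tendsto_exp_atBot.comp
      (tendsto_neg_atTop_atBot.atBot_mul_const hu0)).mul_const (g u))
  simpa using tendsto_integral_filter_of_dominated_convergence
    (F := fun r u ↦ Real.exp (-r * u) * g u) (fun u ↦ ‖g u‖)
    (Eventually.of_forall fun r ↦
      (by fun_prop : Continuous fun u ↦ Real.exp (-r * u)).aestronglyMeasurable.mul
        hg.aestronglyMeasurable)
    ((eventually_ge_atTop 0).mono fun r hr ↦ by
      filter_upwards [ae_restrict_mem hs] with u hu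
      rw [norm_mul, Real.norm_of_nonneg (Real.exp_pos _).le]
      exact mul_le_of_le_one_left (norm_nonneg _)
        (Real.exp_le_one_iff.mpr (by nlinarith [mem_Ici.mp (hs0 hu)])))
    hg.norm hlim

theorem eqOn_zero_of_le_setIntegral_mul_sub {T : ℝ} {k W : ℝ → ℝ}
    (hk_nonneg : ∀ t ∈ Icc (0 : ℝ) T, 0 ≤ k t) (hk_int : IntegrableOn k (Icc 0 T))
    (hk_lt_one : ∫ u in Icc 0 T, k u < 1)
    (hW_nonneg : ∀ t ∈ Icc (0 : ℝ) T, 0 ≤ W t) (hW_bdd : BddAbove (W '' Icc 0 T))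
    (hW_le : ∀ t ∈ Icc (0 : ℝ) T, W t ≤ ∫ s in Icc 0 t, W s * k (t - s)) :
    EqOn W 0 (Icc 0 T) := by
  intro t ht
  set M := sSup (W '' Icc 0 T)
  have hW_le_M : ∀ s ∈ Icc 0 T, W s ≤ M := fun s hs ↦ le_csSup hW_bdd (mem_image_of_mem W hs)
  have hM_nonneg : 0 ≤ M := (hW_nonneg t ht).trans (hW_le_M t ht)
  have hW_le_mul : ∀ τ ∈ Icc 0 T, W τ ≤ M * ∫ u in Icc 0 T, k u := by
    intro τ hτ
    have hsub : Icc 0 τ ⊆ Icc 0 T := Icc_subset_Icc_right hτ.2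
    have hmem : ∀ s ∈ Icc 0 τ, s ∈ Icc 0 T ∧ τ - s ∈ Icc 0 T := fun s hs ↦
      ⟨hsub hs, by constructor <;> linarith [hs.1, hs.2, hτ.2]⟩
    have hk_refl : IntegrableOn (fun s ↦ k (τ - s)) (Icc 0 τ) := by
      simpa using (hk_int.mono_set hsub).comp_sub_left_Icc_s7 τ
    calc W τ ≤ ∫ s in Icc 0 τ, W s * k (τ - s) := hW_le τ hτ
      _ ≤ ∫ s in Icc 0 τ, M * k (τ - s) := by
        refine integral_mono_of_nonneg ?_ (hk_refl.const_mul M) ?_ <;>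
          refine ae_restrict_of_forall_mem measurableSet_Icc fun s hs ↦ ?_
        · exact mul_nonneg (hW_nonneg s (hmem s hs).1) (hk_nonneg _ (hmem s hs).2)
        · exact mul_le_mul_of_nonneg_right (hW_le_M s (hmem s hs).1) (hk_nonneg _ (hmem s hs).2)
      _ = M * ∫ u in Icc 0 τ, k u := by
        rw [integral_const_mul, setIntegral_Icc_comp_sub_left_s7 k hτ.1, sub_self, sub_zero]
      _ ≤ M * ∫ u in Icc 0 T, k u := by
        refine mul_le_mul_of_nonneg_left ?_ hM_nonneg
        exact setIntegral_mono_set hk_int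
          (ae_restrict_of_forall_mem measurableSet_Icc hk_nonneg) hsub.eventuallyLE
  have hM_le : M ≤ M * ∫ u in Icc 0 T, k u :=
    csSup_le ⟨W t, mem_image_of_mem W ht⟩ (forall_mem_image.mpr hW_le_mul)
  have hM_nonpos : M ≤ 0 := by nlinarith
  exact le_antisymm ((hW_le_M t ht).trans hM_nonpos) (hW_nonneg t ht)

theorem exp_neg_mul_mul_le_setIntegral {H g : ℝ → ℝ} {t : ℝ} (r : ℝ)
    (h : H t ≤ ∫ s in Icc 0 t, H s * g (t - s)) :
    Real.exp (-r * t) * H t ≤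
      ∫ s in Icc 0 t, Real.exp (-r * s) * H s * (Real.exp (-r * (t - s)) * g (t - s)) :=
  calc Real.exp (-r * t) * H t ≤ Real.exp (-r * t) * ∫ s in Icc 0 t, H s * g (t - s) :=
        mul_le_mul_of_nonneg_left h (Real.exp_pos _).le
    _ = ∫ s in Icc 0 t, Real.exp (-r * s) * H s * (Real.exp (-r * (t - s)) * g (t - s)) := by
        rw [← integral_const_mul]
        congr 1 with s
        rw [show -r * t = -r * s + -r * (t - s) by ring, Real.exp_add]
        ring

theorem stmt_7_general (T : ℝ) (g : ℝ → ℝ)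
    (hg_nonneg : ∀ t ∈ Icc (0 : ℝ) T, 0 ≤ g t)
    (hg_int : IntegrableOn g (Icc (0 : ℝ) T))
    (H : ℝ → ℝ)
    (hH_nonneg : ∀ t ∈ Icc (0 : ℝ) T, 0 ≤ H t)
    (hH_bdd : BddAbove (H '' Icc (0 : ℝ) T))
    (hrec : ∀ t ∈ Icc (0 : ℝ) T, H t ≤ ∫ s in Icc (0 : ℝ) t, H s * g (t - s)) :
    ∀ t ∈ Icc (0 : ℝ) T, H t = 0 := by
  obtain ⟨r, hr_nonneg, hr_lt_one⟩ :
      ∃ r : ℝ, 0 ≤ r ∧ ∫ u in Icc 0 T, Real.exp (-r * u) * g u < 1 :=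
    ((eventually_ge_atTop 0).and <|
      (tendsto_setIntegral_exp_neg_mul_mul_atTop measurableSet_Icc Icc_subset_Ici_self
        hg_int).eventually_lt_const one_pos).exists
  obtain ⟨C, hC⟩ := hH_bdd
  have hexp_le_one : ∀ t ∈ Icc (0 : ℝ) T, Real.exp (-r * t) ≤ 1 := fun t ht ↦
    Real.exp_le_one_iff.mpr (by nlinarith [ht.1])
  have hW := eqOn_zero_of_le_setIntegral_mul_sub (W := fun t ↦ Real.exp (-r * t) * H t)
    (fun t ht ↦ mul_nonneg (Real.exp_pos _).le (hg_nonneg t ht))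
    (hg_int.continuousOn_mul (by fun_prop) isCompact_Icc) hr_lt_one
    (fun t ht ↦ mul_nonneg (Real.exp_pos _).le (hH_nonneg t ht))
    ⟨C, forall_mem_image.mpr fun t ht ↦
      (mul_le_of_le_one_left (hH_nonneg t ht) (hexp_le_one t ht)).trans
        (hC (mem_image_of_mem H ht))⟩
    (fun t ht ↦ exp_neg_mul_mul_le_setIntegral r (hrec t ht))
  intro t ht
  simpa [(Real.exp_pos _).ne'] using hW ht

/-- Convolution-kernel version of Gronwall's lemma, used for uniqueness: if
`H : [0,T] → [0,∞)` is measurable and bounded with `H(t) ≤ ∫₀ᵗ H(s) g(t-s) ds` for all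
`t ∈ [0,T]`, where `g ≥ 0` is integrable on `[0,T]`, then `H ≡ 0` on `[0,T]`. -/
theorem stmt_7 (T : ℝ) (hT : 0 < T) (g : ℝ → ℝ) (hg_meas : Measurable g)
    (hg_nonneg : ∀ t ∈ Icc (0 : ℝ) T, 0 ≤ g t)
    (hg_int : IntegrableOn g (Icc (0 : ℝ) T))
    (H : ℝ → ℝ) (hH_meas : Measurable H)
    (hH_nonneg : ∀ t ∈ Icc (0 : ℝ) T, 0 ≤ H t)
    (hH_bdd : BddAbove (H '' Icc (0 : ℝ) T))
    (hrec : ∀ t ∈ Icc (0 : ℝ) T, H t ≤ ∫ s in Icc (0 : ℝ) t, H s * g (t - s)) :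
    ∀ t ∈ Icc (0 : ℝ) T, H t = 0 :=
  stmt_7_general T g hg_nonneg hg_int H hH_nonneg hH_bdd hrec
end

section
/- Fix T > 0 and ε > 0, and define k_t(ξ) = e^{−tξ²/2} · min(1, εξ²/2) for t ∈ [0,T] and ξ ∈ ℝ. Then for every t ∈ [0,T], every h ∈ [0,ε], and every ξ ∈ ℝ, |exp(−(t+h)ξ²/2) − exp(−tξ²/2)| ≤ k_t(ξ); moreover ∫₀ᵀ ∫_ℝ k_t(ξ)² dξ dt < ∞. -/
open MeasureTheory Set

/-- Verification of Hypothesis H2(c) for the heat equation: with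
`k_t(ξ) = e^{-tξ²/2}·min(1, εξ²/2)`, one has
`|exp(-(t+h)ξ²/2) - exp(-tξ²/2)| ≤ k_t(ξ)` for all `t ∈ [0,T]`, `h ∈ [0,ε]`, `ξ ∈ ℝ`,
and `∫₀ᵀ ∫_ℝ k_t(ξ)² dξ dt < ∞`. -/
theorem stmt_13 (T ε : ℝ) (hT : 0 < T) (hε : 0 < ε)
    (k : ℝ → ℝ → ℝ)
    (hk : ∀ t ∈ Icc (0 : ℝ) T, ∀ ξ : ℝ,
      k t ξ = Real.exp (-t * ξ ^ 2 / 2) * min 1 (ε * ξ ^ 2 / 2)) :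
    (∀ t ∈ Icc (0 : ℝ) T, ∀ h ∈ Icc (0 : ℝ) ε, ∀ ξ : ℝ,
      |Real.exp (-(t + h) * ξ ^ 2 / 2) - Real.exp (-t * ξ ^ 2 / 2)| ≤ k t ξ) ∧
    (∫⁻ t in Icc (0 : ℝ) T, ∫⁻ ξ : ℝ, ENNReal.ofReal ((k t ξ) ^ 2)) < ⊤ := by
  constructor
  · intro t ht h hh ξ
    rw [hk t ht ξ]
    have hξ : (0:ℝ) ≤ ξ ^ 2 := sq_nonneg ξ
    have hb : (0:ℝ) ≤ h * ξ ^ 2 / 2 := div_nonneg (mul_nonneg hh.1 hξ) two_pos.le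
    have key : Real.exp (-(t + h) * ξ ^ 2 / 2) - Real.exp (-t * ξ ^ 2 / 2)
        = Real.exp (-t * ξ ^ 2 / 2) * (Real.exp (-(h * ξ ^ 2 / 2)) - 1) := by
      rw [mul_sub, ← Real.exp_add]; ring_nf
    rw [key, abs_mul, abs_of_pos (Real.exp_pos _)]
    apply mul_le_mul_of_nonneg_left _ (Real.exp_pos _).le
    rw [abs_of_nonpos (by simp [Real.exp_le_one_iff.2 (neg_nonpos.2 hb)] : Real.exp (-(h * ξ ^ 2 / 2)) - 1 ≤ 0)]
    rw [neg_sub]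
    apply le_min
    · linarith [Real.exp_pos (-(h * ξ ^ 2 / 2))]
    · have := Real.add_one_le_exp (-(h * ξ ^ 2 / 2))
      have hhe : h * ξ ^ 2 / 2 ≤ ε * ξ ^ 2 / 2 := by
        have := hh.2; nlinarith
      linarith
  · have key : ∀ t ∈ Ioc (0:ℝ) T,
        (∫⁻ ξ : ℝ, ENNReal.ofReal ((k t ξ) ^ 2)) ≤ ENNReal.ofReal (Real.sqrt (Real.pi / t)) := by
      intro t ht
      have ht' : t ∈ Icc (0:ℝ) T := ⟨ht.1.le, ht.2⟩
      calc (∫⁻ ξ : ℝ, ENNReal.ofReal ((k t ξ) ^ 2))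
          ≤ ∫⁻ ξ : ℝ, ENNReal.ofReal (Real.exp (-t * ξ ^ 2)) := by
            apply lintegral_mono
            intro ξ
            apply ENNReal.ofReal_le_ofReal
            rw [hk t ht' ξ, mul_pow]
            have h1 : (Real.exp (-t * ξ ^ 2 / 2)) ^ 2 = Real.exp (-t * ξ ^ 2) := by
              rw [← Real.exp_nat_mul]; ring_nf
            have h2 : (min 1 (ε * ξ ^ 2 / 2)) ^ 2 ≤ 1 := by
              have : min 1 (ε * ξ ^ 2 / 2) ≤ 1 := min_le_left _ _
              have h0 : (0:ℝ) ≤ min 1 (ε * ξ ^ 2 / 2) := le_min zero_le_one (by positivity)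
              nlinarith
            calc Real.exp (-t * ξ ^ 2 / 2) ^ 2 * min 1 (ε * ξ ^ 2 / 2) ^ 2
                ≤ Real.exp (-t * ξ ^ 2 / 2) ^ 2 * 1 :=
                  mul_le_mul_of_nonneg_left h2 (sq_nonneg _)
              _ = Real.exp (-t * ξ ^ 2) := by rw [mul_one, h1]
        _ = ENNReal.ofReal (Real.sqrt (Real.pi / t)) := by
            rw [← integral_gaussian t,
              ← ofReal_integral_eq_lintegral_ofReal (integrable_exp_neg_mul_sq ht.1)
                (Filter.Eventually.of_forall fun x => (Real.exp_pos _).le)]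
    calc (∫⁻ t in Icc (0 : ℝ) T, ∫⁻ ξ : ℝ, ENNReal.ofReal ((k t ξ) ^ 2))
        = ∫⁻ t in Ioc (0 : ℝ) T, ∫⁻ ξ : ℝ, ENNReal.ofReal ((k t ξ) ^ 2) :=
          (setLIntegral_congr (Ioc_ae_eq_Icc)).symm
      _ ≤ ∫⁻ t in Ioc (0 : ℝ) T, ENNReal.ofReal (Real.sqrt Real.pi * t ^ (-(1/2) : ℝ)) := by
          apply setLIntegral_mono' measurableSet_Ioc
          intro t ht
          refine (key t ht).trans (ENNReal.ofReal_le_ofReal ?_)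
          rw [Real.sqrt_div Real.pi_nonneg, Real.rpow_neg ht.1.le, ← Real.sqrt_eq_rpow,
            div_eq_mul_inv]
      _ < ⊤ := by
          have hint : IntegrableOn (fun t : ℝ => Real.sqrt Real.pi * t ^ (-(1/2) : ℝ)) (Ioc 0 T) := by
            apply Integrable.const_mul
            exact (intervalIntegral.intervalIntegrable_rpow' (by norm_num)).1
          exact hint.lintegral_lt_top
end
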